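/- arXiv:2004.04726 — 3 statements merged into one kernel-verified Lean document; each statement's English description precedes it below -/
import Mathlib

section
/- If ⊲₁ and ⊲₂ are two adapted orders to A lying in the same equivalence class (same standard and costandard modules), then their intersection (as relations on I) is an adapted order in the same equivalence class. Consequently, each equivalence class of adapted posets contains a unique minimal poset with respect to inclusion of relations. -/
/-!
STATEMENT 2.  Let `A` be an Artin algebra with a complete set `{S i}_{i ∈ I}` of pairwise
non-isomorphic simple modules, projective covers `P i`, and injective envelopes `J i`.
Two partial orders are equivalent if they give the same standard and costandard modules.
If `⊲₁` and `⊲₂` are adapted orders in the same equivalence class, then their intersection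
is an adapted order in the same class; consequently, each equivalence class of adapted
orders contains a unique minimal (i.e. least, for inclusion of relations) partial order.
-/

universe v u

variable (A : Type u) [Ring A]

/-- `S` is a composition factor of `M`. -/
def IsCompFactor (S M : ModuleCat.{v} A) : Prop :=
  ∃ (N N' : Submodule A M), N ≤ N' ∧
    Nonempty ((↥N' ⧸ Submodule.comap N'.subtype N) ≃ₗ[A] S)

/-- `M` has simple top isomorphic to `S`. -/
def HasSimpleTop (S M : ModuleCat.{v} A) : Prop :=
  ∃ N : Submodule A M, IsCoatom N ∧ (∀ N' : Submodule A M, IsCoatom N' → N' = N) ∧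
    Nonempty ((↥M ⧸ N) ≃ₗ[A] S)

/-- `M` has simple socle isomorphic to `S`. -/
def HasSimpleSocle (S M : ModuleCat.{v} A) : Prop :=
  ∃ N : Submodule A M, IsAtom N ∧ (∀ N' : Submodule A M, IsAtom N' → N' = N) ∧
    Nonempty (↥N ≃ₗ[A] S)

/-- The Dlab–Ringel adaptedness condition. -/
def AdaptedMod {I : Type*} (S : I → ModuleCat.{v} A) (lhd : I → I → Prop) : Prop :=
  ∀ (M : ModuleCat.{v} A) (i j : I),
    HasSimpleTop A (S i) M → HasSimpleSocle A (S j) M →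
    ¬ lhd i j → ¬ lhd j i →
    ∃ k, lhd i k ∧ lhd j k ∧ IsCompFactor A (S k) M

/-- `D` is the standard module `Δ(i)` with respect to `⊲`. -/
def IsStandardModule {I : Type*} (S P : I → ModuleCat.{v} A) (lhd : I → I → Prop)
    (i : I) (D : ModuleCat.{v} A) : Prop :=
  ∃ K : Submodule A (P i),
    Nonempty ((↥(P i) ⧸ K) ≃ₗ[A] D) ∧
    (∀ j, IsCompFactor A (S j) D → lhd j i) ∧
    ∀ N : Submodule A (P i),
      (∀ j, IsCompFactor A (S j) (ModuleCat.of A (↥(P i) ⧸ N)) → lhd j i) → K ≤ N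

/-- `D` is the costandard module `∇(i)` with respect to `⊲`: the largest submodule of `J i`
all of whose composition factors `S j` satisfy `j ⊲ i`. -/
def IsCostandardModule {I : Type*} (S J : I → ModuleCat.{v} A) (lhd : I → I → Prop)
    (i : I) (D : ModuleCat.{v} A) : Prop :=
  ∃ K : Submodule A (J i),
    Nonempty ((↥K : Type v) ≃ₗ[A] D) ∧
    (∀ j, IsCompFactor A (S j) D → lhd j i) ∧
    ∀ N : Submodule A (J i),
      (∀ j, IsCompFactor A (S j) (ModuleCat.of A ↥N) → lhd j i) → N ≤ K

/-- `P` is a projective cover of `S`. -/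
def IsProjCover (P S : ModuleCat.{v} A) : Prop :=
  Module.Projective A P ∧
  ∃ f : P →ₗ[A] S, Function.Surjective f ∧
    ∀ N : Submodule A P, N ⊔ LinearMap.ker f = ⊤ → N = ⊤

/-- `J` is an injective envelope of `S`. -/
def IsInjEnvelope (J S : ModuleCat.{v} A) : Prop :=
  Module.Injective A J ∧
  ∃ f : S →ₗ[A] J, Function.Injective f ∧
    ∀ N : Submodule A J, N ≠ ⊥ → N ⊓ LinearMap.range f ≠ ⊥


/-!
The standard and costandard modules of `⊲₁ ∩ ⊲₂` are witnessed by those of `⊲₁`, since their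
composition factors lie below in both orders. For adaptedness, let `M` have top `S i` and socle
`S j`, with `i` and `j` incomparable for the intersection; replacing `M` by a suitable submodule,
it is artinian and has a largest proper submodule. Embedding `M` into `J j`, the preimage `V` of
`∇(j)` is the largest submodule of `M` with composition factors below `j`, for both orders at
once. A minimal submodule `Y ⊄ V` has top some `S m`, and adaptedness of each order, applied to
`Y`, forces `j ⊲ m` strictly in both. If also `i ⊲ m` in both, `k = m` works; otherwise a quotient
of `M ⧸ V` has top `S i` and socle `S m`, and we recurse on `m`, which lies strictly above `j` in
the finite order `⊲₁`.

The adapted orders of a class are finitely many and closed under intersection, so the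
intersection of all of them is the least one.
-/

def CompFactorsBelow {I : Type*} (S : I → ModuleCat.{v} A) (lhd : I → I → Prop) (j : I)
    (M : ModuleCat.{v} A) : Prop :=
  ∀ t, IsCompFactor A (S t) M → lhd t j

def IsLocalWithTop (S M : ModuleCat.{v} A) : Prop :=
  ∃ C : Submodule A M, IsGreatest {N | N ≠ ⊤} C ∧ Nonempty ((M ⧸ C) ≃ₗ[A] S)

def IsColocalWithSocle (S M : ModuleCat.{v} A) : Prop :=
  ∃ N : Submodule A M, IsLeast {N | N ≠ ⊥} N ∧ Nonempty (N ≃ₗ[A] S)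

variable {A}

section CompFactor

variable {S T M M' : ModuleCat.{v} A}

theorem isCompFactor_iff_exists_surjective :
    IsCompFactor A S M ↔ ∃ (X : Submodule A M) (f : X →ₗ[A] S), Function.Surjective f := by
  constructor
  · rintro ⟨N, N', -, ⟨e⟩⟩
    exact ⟨N', e.toLinearMap ∘ₗ (N.comap N'.subtype).mkQ,
      e.surjective.comp (Submodule.mkQ_surjective _)⟩
  · rintro ⟨X, f, hf⟩
    refine ⟨(LinearMap.ker f).map X.subtype, X, Submodule.map_subtype_le _ _, ⟨?_⟩⟩
    have hker : ((LinearMap.ker f).map X.subtype).comap X.subtype = LinearMap.ker f := by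
      rw [Submodule.comap_map_eq, Submodule.ker_subtype, sup_bot_eq]
    exact (Submodule.quotEquivOfEq _ _ hker).trans (f.quotKerEquivOfSurjective hf)

theorem isCompFactor_of_surjective (f : M →ₗ[A] S) (hf : Function.Surjective f) :
    IsCompFactor A S M := by
  refine isCompFactor_iff_exists_surjective.mpr ⟨⊤, f ∘ₗ Submodule.subtype ⊤, fun s => ?_⟩
  obtain ⟨x, rfl⟩ := hf s
  exact ⟨⟨x, trivial⟩, rfl⟩

theorem IsCompFactor.of_injective (f : M →ₗ[A] M') (hf : Function.Injective f)
    (h : IsCompFactor A S M) : IsCompFactor A S M' := by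
  obtain ⟨X, g, hg⟩ := isCompFactor_iff_exists_surjective.mp h
  exact isCompFactor_iff_exists_surjective.mpr ⟨X.map f,
    g ∘ₗ (Submodule.equivMapOfInjective f hf X).symm.toLinearMap,
    hg.comp (Submodule.equivMapOfInjective f hf X).symm.surjective⟩

theorem IsCompFactor.of_surjective (f : M →ₗ[A] M') (hf : Function.Surjective f)
    (h : IsCompFactor A S M') : IsCompFactor A S M := by
  obtain ⟨X, g, hg⟩ := isCompFactor_iff_exists_surjective.mp h
  refine isCompFactor_iff_exists_surjective.mpr
    ⟨X.comap f, g ∘ₗ f.restrict fun _ hx => hx, hg.comp ?_⟩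
  rintro ⟨y, hy⟩
  obtain ⟨x, rfl⟩ := hf y
  exact ⟨⟨x, hy⟩, rfl⟩

theorem IsCompFactor.of_quotient {N : Submodule A M}
    (h : IsCompFactor A S (ModuleCat.of A (M ⧸ N))) : IsCompFactor A S M :=
  h.of_surjective (M' := ModuleCat.of A (M ⧸ N)) N.mkQ N.mkQ_surjective

theorem IsCompFactor.of_submodule {N : Submodule A M}
    (h : IsCompFactor A S (ModuleCat.of A N)) : IsCompFactor A S M :=
  h.of_injective (M := ModuleCat.of A N) N.subtype N.injective_subtype

theorem IsCompFactor.submodule_or_quotient (hS : IsSimpleModule A S) (N : Submodule A M)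
    (h : IsCompFactor A S M) :
    IsCompFactor A S (ModuleCat.of A N) ∨ IsCompFactor A S (ModuleCat.of A (M ⧸ N)) := by
  obtain ⟨X, f, hf⟩ := isCompFactor_iff_exists_surjective.mp h
  let g : ↥(X ⊓ N) →ₗ[A] S := f ∘ₗ Submodule.inclusion inf_le_left
  rcases eq_bot_or_eq_top (LinearMap.range g) with hg | hg
  · right
    let ρ := N.mkQ.submoduleMap X
    have hρ : Function.Surjective ρ := N.mkQ.submoduleMap_surjective X
    have hker : LinearMap.ker ρ ≤ LinearMap.ker f := fun x hx => by
      have hxN : (x : M) ∈ N := by simpa [ρ] using congrArg Subtype.val hx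
      exact LinearMap.congr_fun (LinearMap.range_eq_bot.mp hg) ⟨x, x.2, hxN⟩
    refine isCompFactor_iff_exists_surjective.mpr ⟨X.map N.mkQ,
      (LinearMap.ker ρ).liftQ f hker ∘ₗ (ρ.quotKerEquivOfSurjective hρ).symm.toLinearMap, ?_⟩
    intro s
    obtain ⟨x, rfl⟩ := hf s
    exact ⟨ρ x, by simp⟩
  · left
    exact (isCompFactor_of_surjective (M := ModuleCat.of A ↥(X ⊓ N)) g
      (LinearMap.range_eq_top.mp hg)).of_injective (M' := ModuleCat.of A N)
      (Submodule.inclusion inf_le_right) (Submodule.inclusion_injective _)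

theorem IsCompFactor.nonempty_linearEquiv (hS : IsSimpleModule A S) (hT : IsSimpleModule A T)
    (h : IsCompFactor A S T) : Nonempty (T ≃ₗ[A] S) := by
  obtain ⟨X, f, hf⟩ := isCompFactor_iff_exists_surjective.mp h
  have := IsSimpleModule.nontrivial A S
  have hf0 : f ≠ 0 := LinearMap.ne_zero_of_surjective hf
  rcases eq_bot_or_eq_top X with rfl | rfl
  · exact absurd (Subsingleton.elim f 0) hf0
  · have : IsSimpleModule A (⊤ : Submodule A T) := IsSimpleModule.congr Submodule.topEquiv
    exact ⟨Submodule.topEquiv.symm.trans (.ofBijective f (LinearMap.bijective_of_ne_zero hf0))⟩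

end CompFactor

section

variable {α : Type*} [PartialOrder α]

theorem IsGreatest.isCoatom_of_ne_top [OrderTop α] {c : α} (h : IsGreatest {x | x ≠ ⊤} c) :
    IsCoatom c :=
  ⟨h.1, fun _ hx => by_contra fun hne => (h.2 hne).not_gt hx⟩

theorem IsGreatest.eq_of_isCoatom [OrderTop α] {c d : α} (h : IsGreatest {x | x ≠ ⊤} c)
    (hd : IsCoatom d) : d = c :=
  ((hd.le_iff.mp (h.2 hd.1)).resolve_left h.1).symm

theorem IsLeast.isAtom_of_ne_bot [OrderBot α] {a : α} (h : IsLeast {x | x ≠ ⊥} a) : IsAtom a :=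
  ⟨h.1, fun _ hx => by_contra fun hne => (h.2 hne).not_gt hx⟩

theorem IsLeast.eq_of_isAtom [OrderBot α] {a b : α} (h : IsLeast {x | x ≠ ⊥} a) (hb : IsAtom b) :
    b = a :=
  ((hb.le_iff.mp (h.2 hb.1)).resolve_left h.1).symm

end

section LocalModules

variable {S T M : ModuleCat.{v} A}

theorem IsLocalWithTop.hasSimpleTop (h : IsLocalWithTop A S M) : HasSimpleTop A S M :=
  let ⟨C, hC, e⟩ := h
  ⟨C, hC.isCoatom_of_ne_top, fun _ hD => hC.eq_of_isCoatom hD, e⟩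

theorem IsColocalWithSocle.hasSimpleSocle (h : IsColocalWithSocle A S M) :
    HasSimpleSocle A S M :=
  let ⟨N, hN, e⟩ := h
  ⟨N, hN.isAtom_of_ne_bot, fun _ hN' => hN.eq_of_isAtom hN', e⟩

theorem IsLocalWithTop.isCompFactor (h : IsLocalWithTop A S M) : IsCompFactor A S M :=
  let ⟨C, _, ⟨e⟩⟩ := h
  isCompFactor_of_surjective (e.toLinearMap ∘ₗ C.mkQ) (e.surjective.comp C.mkQ_surjective)

theorem IsLocalWithTop.quotient (h : IsLocalWithTop A S M) {Z : Submodule A M} (hZ : Z ≠ ⊤) :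
    IsLocalWithTop A S (ModuleCat.of A (M ⧸ Z)) := by
  obtain ⟨C, hC, ⟨e⟩⟩ := h
  have hZC : Z ≤ C := hC.2 hZ
  refine ⟨C.map Z.mkQ, ⟨fun htop => hC.1 ?_, fun N hN => ?_⟩,
    ⟨(Submodule.quotientQuotientEquivQuotient Z C hZC).trans e⟩⟩
  · rwa [Submodule.map_mkQ_eq_top, sup_eq_right.mpr hZC] at htop
  · have hN' : N.comap Z.mkQ ≠ ⊤ := fun htop => hN <| by
      rw [← Submodule.map_comap_eq_of_surjective Z.mkQ_surjective N, htop, Submodule.map_top,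
        Submodule.range_mkQ]
    rw [← Submodule.map_comap_eq_of_surjective Z.mkQ_surjective N]
    exact Submodule.map_mono (hC.2 hN')

noncomputable def Submodule.quotComapSubtypeEquivMap {N : Type*} [AddCommGroup N] [Module A N]
    (Y V : Submodule A N) : (Y ⧸ V.comap Y.subtype) ≃ₗ[A] Y.map V.mkQ :=
  (Submodule.quotEquivOfEq _ _ (by rw [LinearMap.ker_comp, Submodule.ker_mkQ])).trans
    ((V.mkQ ∘ₗ Y.subtype).quotKerEquivRange.trans
      (LinearEquiv.ofEq _ _ (by rw [LinearMap.range_comp, Submodule.range_subtype])))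

theorem IsColocalWithSocle.exists_injective {J : ModuleCat.{v} A} (h : IsColocalWithSocle A S M)
    (hJ : IsInjEnvelope A J S) : ∃ g : M →ₗ[A] J, Function.Injective g := by
  obtain ⟨N, hN, ⟨e⟩⟩ := h
  obtain ⟨hinj, f, hf, -⟩ := hJ
  obtain ⟨g, hg⟩ := hinj.out N.subtype N.injective_subtype (f ∘ₗ e.toLinearMap)
  refine ⟨g, LinearMap.ker_eq_bot.mp (by_contra fun hker => hN.1 ?_)⟩
  refine eq_bot_iff.mpr fun x hx => ?_
  have hfx : f (e ⟨x, hx⟩) = 0 := (hg ⟨x, hx⟩).symm.trans (hN.2 hker hx)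
  simpa [map_eq_zero_iff f hf] using hfx

theorem exists_minimal_not_le_of_isArtinian {P V : Submodule A M} [IsArtinian A P]
    (hPV : ¬ P ≤ V) : ∃ Y ≤ P, ¬ Y ≤ V ∧ ∀ T < Y, T ≤ V := by
  obtain ⟨Y, hYV, hmin⟩ := IsArtinian.set_has_minimal {Y : Submodule A P | ¬ Y.map P.subtype ≤ V}
    ⟨⊤, by simpa using hPV⟩
  refine ⟨Y.map P.subtype, Submodule.map_subtype_le _ _, hYV, fun T hT => by_contra fun hTV => ?_⟩
  have hTP : P ⊓ T = T := inf_eq_right.mpr (hT.le.trans (Submodule.map_subtype_le _ _))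
  refine hmin (T.comap P.subtype) (show ¬ _ ≤ V by rwa [Submodule.map_comap_subtype, hTP]) ?_
  have hlt := (Submodule.MapSubtype.orderEmbedding P).lt_iff_lt (a := T.comap P.subtype) (b := Y)
  simp only [Submodule.map_subtype_embedding_eq, Submodule.map_comap_subtype, hTP] at hlt
  exact hlt.mp hT

theorem isGreatest_comap_subtype_of_forall_lt_le {Y V : Submodule A M} (hYV : ¬ Y ≤ V)
    (hmin : ∀ T < Y, T ≤ V) : IsGreatest {N : Submodule A Y | N ≠ ⊤} (V.comap Y.subtype) := by
  refine ⟨fun h => hYV (Submodule.comap_subtype_eq_top.mp h), fun N hN => ?_⟩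
  refine Submodule.map_le_iff_le_comap.mp (hmin _ ?_)
  simpa using Submodule.map_strictMono_of_injective Y.injective_subtype (lt_top_iff_ne_top.mpr hN)

theorem isColocalWithSocle_submodule_of_le_map {W N : Submodule A M} (e : N ≃ₗ[A] S)
    (hN : N ≠ ⊥) (hNW : N ≤ W) (hle : ∀ U : Submodule A W, U ≠ ⊥ → N ≤ U.map W.subtype) :
    IsColocalWithSocle A S (ModuleCat.of A W) := by
  refine ⟨N.comap W.subtype, ⟨fun hbot => hN ?_, fun U hU => ?_⟩,
    ⟨(Submodule.comapSubtypeEquivOfLe hNW).trans e⟩⟩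
  · rw [← inf_eq_right.mpr hNW, ← Submodule.map_comap_subtype, hbot, Submodule.map_bot]
  · simpa only [Submodule.comap_map_eq_of_injective W.injective_subtype] using
      Submodule.comap_mono (f := W.subtype) (hle U hU)

theorem IsColocalWithSocle.submodule (h : IsColocalWithSocle A S M) {W : Submodule A M}
    (hW : W ≠ ⊥) : IsColocalWithSocle A S (ModuleCat.of A W) := by
  obtain ⟨N, hN, ⟨e⟩⟩ := h
  refine isColocalWithSocle_submodule_of_le_map e hN.1 (hN.2 hW) fun U hU => hN.2 fun hbot => ?_
  exact hU (Submodule.map_injective_of_injective W.injective_subtype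
    (hbot.trans (Submodule.map_bot _).symm))

theorem HasSimpleSocle.isColocalWithSocle_submodule (h : HasSimpleSocle A S M)
    {W : Submodule A M} [IsArtinian A W] (hW : W ≠ ⊥) :
    IsColocalWithSocle A S (ModuleCat.of A W) := by
  obtain ⟨N, hN, huniq, ⟨e⟩⟩ := h
  have hle : ∀ U : Submodule A W, U ≠ ⊥ → N ≤ U.map W.subtype := fun U hU => by
    obtain ⟨X, hX, hXU⟩ := (eq_bot_or_exists_atom_le U).resolve_left hU
    rw [← huniq _ ((W.mapIic.isAtom_iff X).mpr hX).of_isAtom_coe_Iic]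
    exact Submodule.map_mono hXU
  have hNW : N ≤ W := by
    simpa using hle ⊤ fun h => hW (by rw [← Submodule.map_subtype_top W, h, Submodule.map_bot])
  exact isColocalWithSocle_submodule_of_le_map e hN.1 hNW hle

theorem exists_isColocalWithSocle_quotient [IsSimpleModule A S] {E : Submodule A M}
    (e : E ≃ₗ[A] S) :
    ∃ Z : Submodule A M, Z ≠ ⊤ ∧ IsColocalWithSocle A S (ModuleCat.of A (M ⧸ Z)) := by
  have hE : IsAtom E := isSimpleModule_iff_isAtom.mp (IsSimpleModule.congr e)
  obtain ⟨Z, hZ⟩ := zorn_le₀ {Z : Submodule A M | Disjoint Z E} fun c hc hchain =>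
    ⟨sSup c, hchain.directedOn.disjoint_sSup_left.mpr fun _ hb => hc hb, fun _ hz => le_sSup hz⟩
  have hZE : Disjoint Z E := hZ.prop
  have hEZ : Z.comap E.subtype = ⊥ := Submodule.disjoint_iff_comap_eq_bot.mp hZE.symm
  refine ⟨Z, fun htop => hE.1 (disjoint_top.mp (htop ▸ hZE).symm), E.map Z.mkQ,
    ⟨fun hbot => hE.1 ?_, fun T hT => ?_⟩,
    ⟨(E.quotComapSubtypeEquivMap Z).symm ≪≫ₗ Submodule.quotEquivOfEqBot _ hEZ ≪≫ₗ e⟩⟩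
  · exact hZE.eq_bot_of_ge (by simpa using LinearMap.le_ker_iff_map.mpr hbot)
  · have hZT : Z < T.comap Z.mkQ := lt_of_le_of_ne (Submodule.le_comap_mkQ Z T) fun h => hT <| by
      rw [← Submodule.map_comap_eq_of_surjective Z.mkQ_surjective T, ← h, Submodule.mkQ_map_self]
    exact Submodule.map_le_iff_le_comap.mpr
      ((hE.not_disjoint_iff_le).mp fun h => hZ.not_prop_of_gt hZT h.symm)

theorem exists_isLocalWithTop_isColocalWithSocle_submodule [IsArtinianRing A]
    (htop : HasSimpleTop A S M) (hsoc : HasSimpleSocle A T M) :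
    ∃ W : Submodule A M, IsArtinian A W ∧ IsLocalWithTop A S (ModuleCat.of A W) ∧
      IsColocalWithSocle A T (ModuleCat.of A W) := by
  obtain ⟨C, hC, -, ⟨e⟩⟩ := htop
  obtain ⟨x, -, hxC⟩ := SetLike.exists_of_lt hC.lt_top
  have : IsArtinian A (A ∙ x) := isArtinian_of_fg_of_artinian _ (Submodule.fg_span_singleton x)
  obtain ⟨W, hWx, hWC, hmin⟩ := exists_minimal_not_le_of_isArtinian (V := C)
    fun h => hxC (h (Submodule.mem_span_singleton_self x))
  have : IsArtinian A W := isArtinian_of_le hWx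
  have hCW : C ⊔ W = ⊤ := hC.2 _ (left_lt_sup.mpr hWC)
  refine ⟨W, this, ⟨C.comap W.subtype, isGreatest_comap_subtype_of_forall_lt_le hWC hmin,
    ⟨W.quotComapSubtypeEquivMap C ≪≫ₗ .ofTop _ ((Submodule.map_mkQ_eq_top C W).mpr hCW) ≪≫ₗ e⟩⟩,
    hsoc.isColocalWithSocle_submodule fun h => hWC (h ▸ bot_le)⟩

theorem exists_isLocalWithTop_submodule_not_le {I : Type*} {S : I → ModuleCat.{v} A}
    (hcomplete : ∀ M : ModuleCat.{v} A, IsSimpleModule A M →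
      ∃ i, Nonempty ((M : Type v) ≃ₗ[A] S i))
    [IsArtinian A M] {V : Submodule A M} (hV : V ≠ ⊤) :
    ∃ (Y : Submodule A M) (m : I), ¬ Y ≤ V ∧ IsLocalWithTop A (S m) (ModuleCat.of A Y) ∧
      Nonempty ((Y ⧸ V.comap Y.subtype) ≃ₗ[A] S m) := by
  obtain ⟨Y, -, hYV, hmin⟩ := exists_minimal_not_le_of_isArtinian (P := ⊤) (V := V)
    fun h => hV (top_le_iff.mp h)
  have hYmax := isGreatest_comap_subtype_of_forall_lt_le hYV hmin
  obtain ⟨m, ⟨e⟩⟩ := hcomplete (ModuleCat.of A (Y ⧸ V.comap Y.subtype))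
    (isSimpleModule_iff_isCoatom.mpr hYmax.isCoatom_of_ne_top)
  exact ⟨Y, m, hYV, ⟨_, hYmax, ⟨e⟩⟩, ⟨e⟩⟩

end LocalModules

section Orders

variable {I : Type*} {S P J : I → ModuleCat.{v} A} {lhd lhd₁ lhd₂ : I → I → Prop}

theorem CompFactorsBelow.of_injective {j : I} {M M' : ModuleCat.{v} A} (f : M →ₗ[A] M')
    (hf : Function.Injective f) (h : CompFactorsBelow A S lhd j M') :
    CompFactorsBelow A S lhd j M :=
  fun t ht => h t (ht.of_injective f hf)

theorem CompFactorsBelow.comap {j : I} {M M' : ModuleCat.{v} A} {K : Submodule A M'}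
    (h : CompFactorsBelow A S lhd j (ModuleCat.of A K)) (f : M →ₗ[A] M')
    (hf : Function.Injective f) : CompFactorsBelow A S lhd j (ModuleCat.of A (K.comap f)) :=
  h.of_injective (f.restrict fun _ hx => hx)
    fun _ _ hab => Subtype.ext (hf (congrArg Subtype.val hab))

theorem IsStandardModule.inf {i : I} {D : ModuleCat.{v} A}
    (h₁ : IsStandardModule A S P lhd₁ i D) (h₂ : IsStandardModule A S P lhd₂ i D) :
    IsStandardModule A S P (lhd₁ ⊓ lhd₂) i D :=
  let ⟨K, e, hfac₁, hmax₁⟩ := h₁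
  let ⟨_, _, hfac₂, _⟩ := h₂
  ⟨K, e, fun t ht => ⟨hfac₁ t ht, hfac₂ t ht⟩, fun N hN => hmax₁ N fun t ht => (hN t ht).1⟩

theorem IsCostandardModule.inf {i : I} {D : ModuleCat.{v} A}
    (h₁ : IsCostandardModule A S J lhd₁ i D) (h₂ : IsCostandardModule A S J lhd₂ i D) :
    IsCostandardModule A S J (lhd₁ ⊓ lhd₂) i D :=
  let ⟨K, e, hfac₁, hmax₁⟩ := h₁
  let ⟨_, _, hfac₂, _⟩ := h₂
  ⟨K, e, fun t ht => ⟨hfac₁ t ht, hfac₂ t ht⟩, fun N hN => hmax₁ N fun t ht => (hN t ht).1⟩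

theorem IsPartialOrder.inf (h₁ : IsPartialOrder I lhd₁) (h₂ : IsPreorder I lhd₂) :
    IsPartialOrder I (lhd₁ ⊓ lhd₂) where
  refl a := ⟨refl_of lhd₁ a, refl_of lhd₂ a⟩
  trans _ _ _ hab hbc := ⟨trans_of lhd₁ hab.1 hbc.1, trans_of lhd₂ hab.2 hbc.2⟩
  antisymm _ _ hab hba := antisymm_of lhd₁ hab.1 hba.1

theorem exists_largest_compFactorsBelow {j : I} {D M : ModuleCat.{v} A}
    (h₁ : IsCostandardModule A S J lhd₁ j D) (h₂ : IsCostandardModule A S J lhd₂ j D)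
    (g : M →ₗ[A] J j) (hg : Function.Injective g) :
    ∃ V : Submodule A M, CompFactorsBelow A S (lhd₁ ⊓ lhd₂) j (ModuleCat.of A V) ∧
      ∀ T : Submodule A M, CompFactorsBelow A S lhd₁ j (ModuleCat.of A T) ∨
        CompFactorsBelow A S lhd₂ j (ModuleCat.of A T) → T ≤ V := by
  obtain ⟨K₁, ⟨e₁⟩, hfac₁, hmax₁⟩ := h₁
  obtain ⟨K₂, ⟨e₂⟩, hfac₂, hmax₂⟩ := h₂
  have hK : K₂ = K₁ := le_antisymm
    (hmax₁ _ fun t ht => hfac₁ t (ht.of_injective (M := ModuleCat.of A K₂) e₂ e₂.injective))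
    (hmax₂ _ fun t ht => hfac₂ t (ht.of_injective (M := ModuleCat.of A K₁) e₁ e₁.injective))
  have hmap : ∀ T : Submodule A M, ModuleCat.of A T ≃ₗ[A] ModuleCat.of A (T.map g) := fun T =>
    Submodule.equivMapOfInjective g hg T
  have hK₁ : CompFactorsBelow A S (lhd₁ ⊓ lhd₂) j (ModuleCat.of A K₁) := fun t ht =>
    have hD := ht.of_injective (M' := D) e₁ e₁.injective
    ⟨hfac₁ t hD, hfac₂ t hD⟩
  refine ⟨K₁.comap g, hK₁.comap g hg, fun T hT => Submodule.map_le_iff_le_comap.mp ?_⟩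
  rcases hT with hT | hT
  · exact hmax₁ _ (hT.of_injective (hmap T).symm (hmap T).symm.injective)
  · exact hK ▸ hmax₂ _ (hT.of_injective (hmap T).symm (hmap T).symm.injective)

theorem IsCompFactor.eq_or_of_quotient_equiv (hsimple : ∀ i, IsSimpleModule A (S i))
    (hnoniso : ∀ i j, Nonempty ((S i : Type v) ≃ₗ[A] S j) → i = j) {M : ModuleCat.{v} A}
    {N : Submodule A M} {m t : I} (e : (M ⧸ N) ≃ₗ[A] S m) (h : IsCompFactor A (S t) M) :
    t = m ∨ IsCompFactor A (S t) (ModuleCat.of A N) :=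
  (h.submodule_or_quotient (hsimple t) N).symm.imp_left fun h => (hnoniso m t
    ((h.of_injective (M' := S m) e e.injective).nonempty_linearEquiv (hsimple t) (hsimple m))).symm

theorem AdaptedMod.le_and_not_le [IsTrans I lhd] (had : AdaptedMod A S lhd) {Y : ModuleCat.{v} A}
    {m j : I} (htop : HasSimpleTop A (S m) Y) (hsoc : HasSimpleSocle A (S j) Y)
    (hfac : ∀ t, IsCompFactor A (S t) Y → t = m ∨ lhd t j)
    (hY : ¬ CompFactorsBelow A S lhd j Y) : lhd j m ∧ ¬ lhd m j := by
  have hmj : ¬ lhd m j := fun hmj => hY fun t ht => (hfac t ht).elim (· ▸ hmj) id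
  refine ⟨by_contra fun hjm => ?_, hmj⟩
  obtain ⟨k, hmk, hjk, hk⟩ := had Y m j htop hsoc hmj hjm
  rcases hfac k hk with rfl | hkj
  · exact hjm hjk
  · exact hmj (trans_of lhd hmk hkj)

theorem exists_inf_upper_bound_compFactor [Finite I]
    (hsimple : ∀ i, IsSimpleModule A (S i))
    (hnoniso : ∀ i j, Nonempty ((S i : Type v) ≃ₗ[A] S j) → i = j)
    (hcomplete : ∀ M : ModuleCat.{v} A, IsSimpleModule A M →
      ∃ i, Nonempty ((M : Type v) ≃ₗ[A] S i))
    (hJ : ∀ i, IsInjEnvelope A (J i) (S i)) [IsTrans I lhd₁] [IsTrans I lhd₂]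
    (had₁ : AdaptedMod A S lhd₁) (had₂ : AdaptedMod A S lhd₂) {Nabla : I → ModuleCat.{v} A}
    (hN₁ : ∀ i, IsCostandardModule A S J lhd₁ i (Nabla i))
    (hN₂ : ∀ i, IsCostandardModule A S J lhd₂ i (Nabla i)) (j : I) :
    ∀ (M : ModuleCat.{v} A) [IsArtinian A M] (i : I), IsLocalWithTop A (S i) M →
      IsColocalWithSocle A (S j) M → ¬ (lhd₁ ⊓ lhd₂) i j → ¬ (lhd₁ ⊓ lhd₂) j i →
      ∃ k, (lhd₁ ⊓ lhd₂) i k ∧ (lhd₁ ⊓ lhd₂) j k ∧ IsCompFactor A (S k) M := by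
  have : IsTrans I fun a b => lhd₁ b a ∧ ¬ lhd₁ a b :=
    ⟨fun _ _ _ hab hbc => ⟨trans_of lhd₁ hbc.1 hab.1, fun hac => hbc.2 (trans_of lhd₁ hab.1 hac)⟩⟩
  have : Std.Irrefl fun a b : I => lhd₁ b a ∧ ¬ lhd₁ a b := ⟨fun _ h => h.2 h.1⟩
  induction j using (Finite.wellFounded_of_trans_of_irrefl
    fun a b : I => lhd₁ b a ∧ ¬ lhd₁ a b).induction with
  | _ j ih =>
  intro M _ i hM hM' hij hji
  obtain ⟨g, hg⟩ := hM'.exists_injective (hJ j)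
  obtain ⟨V, hV, hVmax⟩ := exists_largest_compFactorsBelow (hN₁ j) (hN₂ j) g hg
  have hVtop : V ≠ ⊤ := by
    rintro rfl
    exact hij (hV i (hM.isCompFactor.of_injective (M' := ModuleCat.of A (⊤ : Submodule A M))
      Submodule.topEquiv.symm.toLinearMap Submodule.topEquiv.symm.injective))
  obtain ⟨Y, m, hYV, hYtop, ⟨e⟩⟩ := exists_isLocalWithTop_submodule_not_le hcomplete hVtop
  have hYsoc : IsColocalWithSocle A (S j) (ModuleCat.of A Y) :=
    hM'.submodule fun h => hYV (h ▸ bot_le)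
  have hYfac : ∀ t, IsCompFactor A (S t) (ModuleCat.of A Y) → t = m ∨ (lhd₁ ⊓ lhd₂) t j :=
    fun t ht => (ht.eq_or_of_quotient_equiv hsimple hnoniso e).imp_right
      fun h => hV.comap (M := ModuleCat.of A Y) Y.subtype Y.injective_subtype t h
  obtain ⟨hjm₁, hmj₁⟩ := had₁.le_and_not_le hYtop.hasSimpleTop hYsoc.hasSimpleSocle
    (fun t ht => (hYfac t ht).imp_right And.left) fun h => hYV (hVmax Y (.inl h))
  obtain ⟨hjm₂, -⟩ := had₂.le_and_not_le hYtop.hasSimpleTop hYsoc.hasSimpleSocle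
    (fun t ht => (hYfac t ht).imp_right And.right) fun h => hYV (hVmax Y (.inr h))
  by_cases him : (lhd₁ ⊓ lhd₂) i m
  · exact ⟨m, him, ⟨hjm₁, hjm₂⟩, hYtop.isCompFactor.of_submodule⟩
  have hmi : ¬ (lhd₁ ⊓ lhd₂) m i := fun h => hji ⟨trans_of lhd₁ hjm₁ h.1, trans_of lhd₂ hjm₂ h.2⟩
  have := hsimple m
  obtain ⟨Z, hZ, hQ⟩ := exists_isColocalWithSocle_quotient (M := ModuleCat.of A (M ⧸ V))
    ((Y.quotComapSubtypeEquivMap V).symm ≪≫ₗ e)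
  obtain ⟨k, hik, hmk, hk⟩ := ih m ⟨hjm₁, hmj₁⟩ (ModuleCat.of A ((M ⧸ V) ⧸ Z)) i
    ((hM.quotient hVtop).quotient hZ) hQ him hmi
  exact ⟨k, hik, ⟨trans_of lhd₁ hjm₁ hmk.1, trans_of lhd₂ hjm₂ hmk.2⟩, hk.of_quotient.of_quotient⟩

end Orders

theorem AdaptedMod.inf [IsArtinianRing A] {I : Type*} [Finite I] {S J : I → ModuleCat.{v} A}
    (hsimple : ∀ i, IsSimpleModule A (S i))
    (hnoniso : ∀ i j, Nonempty ((S i : Type v) ≃ₗ[A] S j) → i = j)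
    (hcomplete : ∀ M : ModuleCat.{v} A, IsSimpleModule A M →
      ∃ i, Nonempty ((M : Type v) ≃ₗ[A] S i))
    (hJ : ∀ i, IsInjEnvelope A (J i) (S i)) {lhd₁ lhd₂ : I → I → Prop} [IsTrans I lhd₁]
    [IsTrans I lhd₂] (had₁ : AdaptedMod A S lhd₁) (had₂ : AdaptedMod A S lhd₂)
    {Nabla : I → ModuleCat.{v} A} (hN₁ : ∀ i, IsCostandardModule A S J lhd₁ i (Nabla i))
    (hN₂ : ∀ i, IsCostandardModule A S J lhd₂ i (Nabla i)) :
    AdaptedMod A S (lhd₁ ⊓ lhd₂) := by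
  intro M i j htop hsoc hij hji
  obtain ⟨W, _, hWtop, hWsoc⟩ := exists_isLocalWithTop_isColocalWithSocle_submodule htop hsoc
  obtain ⟨k, hik, hjk, hk⟩ := exists_inf_upper_bound_compFactor hsimple hnoniso hcomplete hJ
    had₁ had₂ hN₁ hN₂ j (ModuleCat.of A W) i hWtop hWsoc hij hji
  exact ⟨k, hik, hjk, hk.of_submodule⟩

theorem intersection_adapted_and_unique_minimal_general
    {A : Type u} [Ring A] [IsArtinianRing A] {I : Type*} [Finite I]
    (S : I → ModuleCat.{v} A)
    (hsimple : ∀ i, IsSimpleModule A (S i))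
    (hnoniso : ∀ i j, Nonempty ((S i : Type v) ≃ₗ[A] S j) → i = j)
    (hcomplete : ∀ M : ModuleCat.{v} A, IsSimpleModule A M → ∃ i, Nonempty ((M : Type v) ≃ₗ[A] S i))
    (P : I → ModuleCat.{v} A)
    (J : I → ModuleCat.{v} A) (hJ : ∀ i, IsInjEnvelope A (J i) (S i))
    (lhd₁ lhd₂ : I → I → Prop)
    (hpo₁ : IsPartialOrder I lhd₁) (hpo₂ : IsPartialOrder I lhd₂)
    (had₁ : AdaptedMod A S lhd₁) (had₂ : AdaptedMod A S lhd₂)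
    -- `⊲₁` and `⊲₂` are in the same equivalence class: they admit common standard modules
    -- `Δ` and common costandard modules `∇`
    (Δ : I → ModuleCat.{v} A) (Nabla : I → ModuleCat.{v} A)
    (hΔ₁ : ∀ i, IsStandardModule A S P lhd₁ i (Δ i))
    (hΔ₂ : ∀ i, IsStandardModule A S P lhd₂ i (Δ i))
    (hN₁ : ∀ i, IsCostandardModule A S J lhd₁ i (Nabla i))
    (hN₂ : ∀ i, IsCostandardModule A S J lhd₂ i (Nabla i)) :
    -- (1) the intersection is adapted and lies in the same equivalence class
    (AdaptedMod A S (fun i j => lhd₁ i j ∧ lhd₂ i j) ∧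
      (∀ i, IsStandardModule A S P (fun i j => lhd₁ i j ∧ lhd₂ i j) i (Δ i)) ∧
      (∀ i, IsCostandardModule A S J (fun i j => lhd₁ i j ∧ lhd₂ i j) i (Nabla i))) ∧
    -- (2) the equivalence class of `⊲₁` contains a unique minimal (least) partial order
    (∃ lhd₀ : I → I → Prop,
      (IsPartialOrder I lhd₀ ∧ AdaptedMod A S lhd₀ ∧
        (∀ i, IsStandardModule A S P lhd₀ i (Δ i)) ∧
        (∀ i, IsCostandardModule A S J lhd₀ i (Nabla i))) ∧
      ∀ lhd : I → I → Prop, IsPartialOrder I lhd → AdaptedMod A S lhd →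
        (∀ i, IsStandardModule A S P lhd i (Δ i)) →
        (∀ i, IsCostandardModule A S J lhd i (Nabla i)) →
        ∀ i j, lhd₀ i j → lhd i j) := by
  let F : Set (I → I → Prop) := {r | IsPartialOrder I r ∧ AdaptedMod A S r ∧
    (∀ i, IsStandardModule A S P r i (Δ i)) ∧ ∀ i, IsCostandardModule A S J r i (Nabla i)}
  have hF : InfClosed F := fun r ⟨hr, har, hΔr, hNr⟩ s ⟨hs, has, hΔs, hNs⟩ =>
    ⟨hr.inf hs.toIsPreorder, AdaptedMod.inf hsimple hnoniso hcomplete hJ har has hNr hNs,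
      fun i => (hΔr i).inf (hΔs i), fun i => (hNr i).inf (hNs i)⟩
  have h₁ : lhd₁ ∈ F := ⟨hpo₁, had₁, hΔ₁, hN₁⟩
  obtain ⟨-, had, hΔ, hN⟩ := hF h₁ ⟨hpo₂, had₂, hΔ₂, hN₂⟩
  refine ⟨⟨had, hΔ, hN⟩, sInf F, hF.sInf_mem_of_nonempty F.toFinite ⟨_, h₁⟩ subset_rfl,
    fun r hr har hΔr hNr => sInf_le (show r ∈ F from ⟨hr, har, hΔr, hNr⟩)⟩

theorem intersection_adapted_and_unique_minimal
    {A : Type u} [Ring A] [IsArtinianRing A] {I : Type*} [Finite I]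
    (S : I → ModuleCat.{v} A)
    (hsimple : ∀ i, IsSimpleModule A (S i))
    (hnoniso : ∀ i j, Nonempty ((S i : Type v) ≃ₗ[A] S j) → i = j)
    (hcomplete : ∀ M : ModuleCat.{v} A, IsSimpleModule A M → ∃ i, Nonempty ((M : Type v) ≃ₗ[A] S i))
    (P : I → ModuleCat.{v} A) (hP : ∀ i, IsProjCover A (P i) (S i))
    (J : I → ModuleCat.{v} A) (hJ : ∀ i, IsInjEnvelope A (J i) (S i))
    (lhd₁ lhd₂ : I → I → Prop)
    (hpo₁ : IsPartialOrder I lhd₁) (hpo₂ : IsPartialOrder I lhd₂)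
    (had₁ : AdaptedMod A S lhd₁) (had₂ : AdaptedMod A S lhd₂)
    -- `⊲₁` and `⊲₂` are in the same equivalence class: they admit common standard modules
    -- `Δ` and common costandard modules `∇`
    (Δ : I → ModuleCat.{v} A) (Nabla : I → ModuleCat.{v} A)
    (hΔ₁ : ∀ i, IsStandardModule A S P lhd₁ i (Δ i))
    (hΔ₂ : ∀ i, IsStandardModule A S P lhd₂ i (Δ i))
    (hN₁ : ∀ i, IsCostandardModule A S J lhd₁ i (Nabla i))
    (hN₂ : ∀ i, IsCostandardModule A S J lhd₂ i (Nabla i)) :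
    -- (1) the intersection is adapted and lies in the same equivalence class
    (AdaptedMod A S (fun i j => lhd₁ i j ∧ lhd₂ i j) ∧
      (∀ i, IsStandardModule A S P (fun i j => lhd₁ i j ∧ lhd₂ i j) i (Δ i)) ∧
      (∀ i, IsCostandardModule A S J (fun i j => lhd₁ i j ∧ lhd₂ i j) i (Nabla i))) ∧
    -- (2) the equivalence class of `⊲₁` contains a unique minimal (least) partial order
    (∃ lhd₀ : I → I → Prop,
      (IsPartialOrder I lhd₀ ∧ AdaptedMod A S lhd₀ ∧
        (∀ i, IsStandardModule A S P lhd₀ i (Δ i)) ∧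
        (∀ i, IsCostandardModule A S J lhd₀ i (Nabla i))) ∧
      ∀ lhd : I → I → Prop, IsPartialOrder I lhd → AdaptedMod A S lhd →
        (∀ i, IsStandardModule A S P lhd i (Δ i)) →
        (∀ i, IsCostandardModule A S J lhd i (Nabla i)) →
        ∀ i j, lhd₀ i j → lhd i j) :=
  intersection_adapted_and_unique_minimal_general S hsimple hnoniso hcomplete P J hJ lhd₁ lhd₂ hpo₁
    hpo₂ had₁ had₂ Δ Nabla hΔ₁ hΔ₂ hN₁ hN₂
end

section
/- For each binary tree T of size n, the order ⊲_T is the minimal adapted order in its equivalence class: every adapted order to Λₙ equivalent to ⊲_T contains ⊲_T as a subrelation. -/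
/-!
STATEMENT 6.  For each binary tree `T` of size `n`, the order `⊲_T` is the minimal adapted
order in its equivalence class: every adapted order to `Λₙ` equivalent to `⊲_T` (i.e. with
the same standard and costandard modules, equivalently the same `Dec` and `Inc` relations)
contains `⊲_T` as a subrelation.
-/

section
variable {V : Type*} (le : V → V → Prop)

/-- Adaptedness of `⊲` with respect to the order `le` (the interval criterion for `Λₙ`). -/
def AdaptedG (lhd : V → V → Prop) : Prop :=
  ∀ i j : V, le i j → ¬ lhd i j → ¬ lhd j i →
    ∃ k : V, le i k ∧ le k j ∧ lhd i k ∧ lhd j k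

/-- `(x, y) ∈ Dec(⊲)`: `S(x)` is a composition factor of the standard module `Δ(y)`. -/
def DecRelG (lhd : V → V → Prop) (x y : V) : Prop :=
  le y x ∧ ∀ k : V, le y k → le k x → lhd k y

/-- `(x, y) ∈ Inc(⊲)`: `S(x)` is a composition factor of the costandard module `∇(y)`. -/
def IncRelG (lhd : V → V → Prop) (x y : V) : Prop :=
  le x y ∧ ∀ k : V, le x k → le k y → lhd k y

/-- Equivalence of adapted orders: equal standard and costandard modules. -/
def QHEquivG (lhd₁ lhd₂ : V → V → Prop) : Prop :=
  (∀ x y, DecRelG le lhd₁ x y ↔ DecRelG le lhd₂ x y) ∧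
  (∀ x y, IncRelG le lhd₁ x y ↔ IncRelG le lhd₂ x y)

end

/-- Binary trees: either empty, or a root with a left and a right subtree. -/
inductive BTree : Type
  | nil : BTree
  | node : BTree → BTree → BTree

/-- Number of vertices of a binary tree. -/
def BTree.size : BTree → ℕ
  | .nil => 0
  | .node l r => l.size + 1 + r.size

/-- The relation `⊲_T` on in-order (0-based) labels. -/
def BTree.rel : BTree → ℕ → ℕ → Prop
  | .nil, _, _ => False
  | .node l r, i, j =>
      (j = l.size ∧ i < l.size + 1 + r.size) ∨
      l.rel i j ∨
      (l.size < i ∧ l.size < j ∧ r.rel (i - (l.size + 1)) (j - (l.size + 1)))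

/-- Convexity of `⊲_T` upwards: if `i ⊲_T j` and `i ≤ k ≤ j` then `k ⊲_T j`. -/
lemma BTree.rel_up (T : BTree) : ∀ {i j k : ℕ}, T.rel i j → i ≤ k → k ≤ j → T.rel k j := by
  induction T with
  | nil => intro i j k h _ _; exact absurd h (by simp [BTree.rel])
  | node l r ihl ihr =>
    intro i j k h hik hkj
    rcases h with ⟨hj, hi⟩ | h | ⟨hmi, hmj, h⟩
    · exact Or.inl ⟨hj, by omega⟩
    · exact Or.inr (Or.inl (ihl h hik hkj))
    · exact Or.inr (Or.inr ⟨by omega, hmj, ihr h (by omega) (by omega)⟩)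

/-- Convexity of `⊲_T` downwards: if `i ⊲_T j` and `j ≤ k ≤ i` then `k ⊲_T j`. -/
lemma BTree.rel_down (T : BTree) : ∀ {i j k : ℕ}, T.rel i j → j ≤ k → k ≤ i → T.rel k j := by
  induction T with
  | nil => intro i j k h _ _; exact absurd h (by simp [BTree.rel])
  | node l r ihl ihr =>
    intro i j k h hjk hki
    rcases h with ⟨hj, hi⟩ | h | ⟨hmi, hmj, h⟩
    · exact Or.inl ⟨hj, by omega⟩
    · exact Or.inr (Or.inl (ihl h hjk hki))
    · exact Or.inr (Or.inr ⟨by omega, hmj, ihr h (by omega) (by omega)⟩)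

/-- `⊲_T` is minimal in its equivalence class of adapted orders to `Λₙ`. -/
theorem btree_order_minimal (n : ℕ) (T : BTree) (hT : T.size = n)
    (lhd : Fin n → Fin n → Prop) (hpo : IsPartialOrder (Fin n) lhd)
    (had : AdaptedG (fun a b : Fin n => a ≤ b) lhd)
    (heq : QHEquivG (fun a b : Fin n => a ≤ b) lhd (fun i j => T.rel i.val j.val)) :
    ∀ i j : Fin n, T.rel i.val j.val → lhd i j := by
  intro i j hrel
  rcases le_total i j with hij | hji
  · have hinc : IncRelG (fun a b : Fin n => a ≤ b) (fun i j => T.rel i.val j.val) i j :=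
      ⟨hij, fun k hik hkj => T.rel_up hrel hik hkj⟩
    exact ((heq.2 i j).mpr hinc).2 i le_rfl hij
  · have hdec : DecRelG (fun a b : Fin n => a ≤ b) (fun i j => T.rel i.val j.val) i j :=
      ⟨hji, fun k hjk hki => T.rel_down hrel hjk hki⟩
    exact ((heq.1 i j).mpr hdec).2 i hji le_rfl
end

section
/- Let Q be an acyclic quiver whose underlying graph is of type Aₙ, with iterated deconcatenation Q¹ ⊔ ⋯ ⊔ Qˡ into equioriented type A quivers of sizes n₁,…,n_ℓ. Then the number of quasi-hereditary structures on kQ equals the product of Catalan numbers C_{n₁} · C_{n₂} ⋯ C_{n_ℓ}. -/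
/-- The arrow relation of the type `A` quiver on `Fin n` with orientation `o`. -/
def lineArrow (n : ℕ) (o : ℕ → Bool) (a b : Fin n) : Prop :=
  (a.val + 1 = b.val ∧ o a.val = true) ∨ (b.val + 1 = a.val ∧ o b.val = false)

/-- Cut point of segment `t`: total number of edges in the first `t` segments. -/
def cutPt (ns : List ℕ) (t : ℕ) : ℕ := ((ns.take t).map fun m => m - 1).sum

/-!
An adapted order `⊲` for a chain has a greatest element `m`. The intervals below and above `m`
are convex, `⊲` restricts to adapted orders on them, and `Dec` and `Inc` of `⊲` are determined by
those of the two restrictions together with `m`; conversely any two adapted orders on the sides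
glue, with `m` on top. This gives the Catalan recursion `C_{k+1} = ∑ C_i C_{k-i}`.

In a type `A` quiver no path passes through a vertex `c` at which the orientation flips, so the
path order is the union of its restrictions to the two sides of `c`, which share only `c`.
Adapted orders on the two sides glue uniquely up to equivalence, so the count is multiplicative
over the segments, and on each equioriented segment the path order is a chain or its dual.
-/

open Set

section QHStr
variable {V : Type*}

def AdaptedOrder (le : V → V → Prop) :=
  {l : V → V → Prop // IsPartialOrder V l ∧ AdaptedG le l}

def qhSetoid (le : V → V → Prop) : Setoid (AdaptedOrder le) where
  r a b := QHEquivG le a.1 b.1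
  iseqv :=
    { refl _ := ⟨fun _ _ => Iff.rfl, fun _ _ => Iff.rfl⟩
      symm h := ⟨fun x y => (h.1 x y).symm, fun x y => (h.2 x y).symm⟩
      trans h h' := ⟨fun x y => (h.1 x y).trans (h'.1 x y), fun x y => (h.2 x y).trans (h'.2 x y)⟩ }

def QHStr (le : V → V → Prop) := Quotient (qhSetoid le)

instance [Finite V] (le : V → V → Prop) : Finite (AdaptedOrder le) :=
  inferInstanceAs (Finite (Subtype _))

instance [Finite V] (le : V → V → Prop) : Finite (QHStr le) :=
  inferInstanceAs (Finite (Quotient (qhSetoid le)))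

theorem card_qhStr_of_isEmpty [IsEmpty V] (le : V → V → Prop) : Nat.card (QHStr le) = 1 := by
  refine Nat.card_eq_one_iff_unique.2 ⟨⟨Quotient.ind₂ fun a b =>
    congrArg _ (Subtype.ext (funext isEmptyElim))⟩, ⟨⟦⟨fun _ _ => True, ?_, isEmptyElim⟩⟧⟩⟩
  exact { refl _ := trivial, trans _ _ _ _ _ := trivial, antisymm := isEmptyElim }

theorem qhEquivG_of_forall_le {le l l' : V → V → Prop}
    (hdec : ∀ x y, le y x → (DecRelG le l x y ↔ DecRelG le l' x y))
    (hinc : ∀ x y, le x y → (IncRelG le l x y ↔ IncRelG le l' x y)) : QHEquivG le l l' := by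
  refine ⟨fun x y => ?_, fun x y => ?_⟩
  · by_cases h : le y x
    · exact hdec x y h
    · exact iff_of_false (fun hd => h hd.1) (fun hd => h hd.1)
  · by_cases h : le x y
    · exact hinc x y h
    · exact iff_of_false (fun hd => h hd.1) (fun hd => h hd.1)

end QHStr

instance {α : Type*} (r : α → α → Prop) [IsPartialOrder α r] (p : α → Prop) :
    IsPartialOrder (Subtype p) (Subrel r p) :=
  (Subrel.relEmbedding r p).isPartialOrder

def Subrel.preimageValIso {α : Type*} (r : α → α → Prop) {s t : Set α} (h : t ⊆ s) :
    Subrel (Subrel r (· ∈ s)) (· ∈ (Subtype.val ⁻¹' t : Set s)) ≃r Subrel r (· ∈ t) where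
  toFun x := ⟨x.1.1, x.2⟩
  invFun y := ⟨⟨y.1, h y.2⟩, y.2⟩
  left_inv _ := rfl
  right_inv _ := rfl
  map_rel_iff' := Iff.rfl

section Restrict
variable {V : Type*} {le : V → V → Prop}

def IsOrdConnected (le : V → V → Prop) (S : Set V) : Prop :=
  ∀ ⦃x y k⦄, x ∈ S → y ∈ S → le x k → le k y → k ∈ S

theorem Set.OrdConnected.isOrdConnected {α : Type*} [Preorder α] {S : Set α}
    (hS : S.OrdConnected) : IsOrdConnected (· ≤ ·) S :=
  fun _ _ _ hx hy h₁ h₂ => hS.out' hx hy ⟨h₁, h₂⟩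

theorem exists_of_adaptedG_subrel {l : V → V → Prop} {S : Set V}
    (hS : AdaptedG (Subrel le (· ∈ S)) (Subrel l (· ∈ S))) {i j : V} (hi : i ∈ S) (hj : j ∈ S)
    (hij : le i j) (h₁ : ¬ l i j) (h₂ : ¬ l j i) : ∃ k, le i k ∧ le k j ∧ l i k ∧ l j k :=
  let ⟨k, hk⟩ := hS ⟨i, hi⟩ ⟨j, hj⟩ hij h₁ h₂
  ⟨k, hk⟩

variable {S : Set V} (hS : IsOrdConnected le S)
include hS

theorem adaptedG_subrel {l : V → V → Prop} (hl : AdaptedG le l) :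
    AdaptedG (Subrel le (· ∈ S)) (Subrel l (· ∈ S)) := by
  intro i j hij h₁ h₂
  obtain ⟨k, hik, hkj, hl₁, hl₂⟩ := hl i j hij h₁ h₂
  exact ⟨⟨k, hS i.2 j.2 hik hkj⟩, hik, hkj, hl₁, hl₂⟩

theorem decRelG_subrel (l : V → V → Prop) (x y : S) :
    DecRelG (Subrel le (· ∈ S)) (Subrel l (· ∈ S)) x y ↔ DecRelG le l x y :=
  and_congr_right fun _ =>
    ⟨fun h k hyk hkx => h ⟨k, hS y.2 x.2 hyk hkx⟩ hyk hkx, fun h k => h k⟩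

theorem incRelG_subrel (l : V → V → Prop) (x y : S) :
    IncRelG (Subrel le (· ∈ S)) (Subrel l (· ∈ S)) x y ↔ IncRelG le l x y :=
  and_congr_right fun _ =>
    ⟨fun h k hxk hky => h ⟨k, hS x.2 y.2 hxk hky⟩ hxk hky, fun h k => h k⟩

def AdaptedOrder.restrict (a : AdaptedOrder le) : AdaptedOrder (Subrel le (· ∈ S)) :=
  ⟨Subrel a.1 (· ∈ S), by have := a.2.1; infer_instance, adaptedG_subrel hS a.2.2⟩

theorem qhEquivG_restrict_iff {a b : AdaptedOrder le} :
    QHEquivG (Subrel le (· ∈ S)) (a.restrict hS).1 (b.restrict hS).1 ↔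
      (∀ x ∈ S, ∀ y ∈ S, DecRelG le a.1 x y ↔ DecRelG le b.1 x y) ∧
      ∀ x ∈ S, ∀ y ∈ S, IncRelG le a.1 x y ↔ IncRelG le b.1 x y := by
  simp only [QHEquivG, AdaptedOrder.restrict, decRelG_subrel hS, incRelG_subrel hS,
    Subtype.forall]

def QHStr.restrict : QHStr le → QHStr (Subrel le (· ∈ S)) :=
  Quotient.map (AdaptedOrder.restrict hS) fun _ _ h =>
    (qhEquivG_restrict_iff hS).2 ⟨fun x _ y _ => h.1 x y, fun x _ y _ => h.2 x y⟩

end Restrict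

section Congr
variable {V W : Type*} {r : V → V → Prop} {s : W → W → Prop} (e : r ≃r s)

def AdaptedOrder.congr (a : AdaptedOrder r) : AdaptedOrder s := by
  refine ⟨e.symm ⁻¹'o a.1, ?_, ?_⟩
  · have := a.2.1
    exact (RelEmbedding.preimage e.symm.toEmbedding a.1).isPartialOrder
  intro i j hij h₁ h₂
  obtain ⟨k, hik, hkj, hl₁, hl₂⟩ := a.2.2 (e.symm i) (e.symm j) (e.symm.map_rel_iff.2 hij) h₁ h₂
  exact ⟨e k, by simpa using e.map_rel_iff.2 hik, by simpa using e.map_rel_iff.2 hkj,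
    by simpa using hl₁, by simpa using hl₂⟩

theorem AdaptedOrder.congr_symm_congr (a : AdaptedOrder r) : (a.congr e).congr e.symm = a :=
  Subtype.ext <| by funext x y; simp [AdaptedOrder.congr, Order.Preimage]

theorem decRelG_preimage_symm (l : V → V → Prop) (x y : W) :
    DecRelG s (e.symm ⁻¹'o l) x y ↔ DecRelG r l (e.symm x) (e.symm y) := by
  simp only [DecRelG, Order.Preimage, ← e.symm.map_rel_iff, e.symm.surjective.forall]

theorem incRelG_preimage_symm (l : V → V → Prop) (x y : W) :
    IncRelG s (e.symm ⁻¹'o l) x y ↔ IncRelG r l (e.symm x) (e.symm y) := by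
  simp only [IncRelG, Order.Preimage, ← e.symm.map_rel_iff, e.symm.surjective.forall]

theorem AdaptedOrder.qhEquivG_congr {a b : AdaptedOrder r} (h : QHEquivG r a.1 b.1) :
    QHEquivG s (a.congr e).1 (b.congr e).1 :=
  ⟨fun x y => (decRelG_preimage_symm e a.1 x y).trans <|
      (h.1 _ _).trans (decRelG_preimage_symm e b.1 x y).symm,
    fun x y => (incRelG_preimage_symm e a.1 x y).trans <|
      (h.2 _ _).trans (incRelG_preimage_symm e b.1 x y).symm⟩

def QHStr.congr : QHStr r ≃ QHStr s where
  toFun := Quotient.map (AdaptedOrder.congr e) fun _ _ => AdaptedOrder.qhEquivG_congr e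
  invFun := Quotient.map (AdaptedOrder.congr e.symm) fun _ _ => AdaptedOrder.qhEquivG_congr e.symm
  left_inv := Quotient.ind fun a => congrArg _ (a.congr_symm_congr e)
  right_inv := Quotient.ind fun a => congrArg _ (a.congr_symm_congr e.symm)

end Congr

section Glue
variable {V : Type*} {L R : Set V}

open Classical in
noncomputable def retraction (S : Set V) {c : V} (hc : c ∈ S) (x : V) : S :=
  if h : x ∈ S then ⟨x, h⟩ else ⟨c, hc⟩

theorem retraction_of_mem {S : Set V} {c : V} (hc : c ∈ S) {x : V} (hx : x ∈ S) :
    retraction S hc x = ⟨x, hx⟩ := dif_pos hx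

variable {c : V} (hLR : L ∩ R = {c})
include hLR

theorem eq_of_mem_of_inter_eq {x : V} (hL : x ∈ L) (hR : x ∈ R) : x = c := hLR.subset ⟨hL, hR⟩

theorem mem_left_of_inter_eq : c ∈ L := (hLR.ge rfl).1

theorem mem_right_of_inter_eq : c ∈ R := (hLR.ge rfl).2

theorem retraction_right_of_mem_left {x : V} (hx : x ∈ L) :
    retraction R (mem_right_of_inter_eq hLR) x = ⟨c, mem_right_of_inter_eq hLR⟩ := by
  have := eq_of_mem_of_inter_eq hLR (x := x)
  unfold retraction
  split_ifs <;> aesop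

theorem retraction_left_of_mem_right {x : V} (hx : x ∈ R) :
    retraction L (mem_left_of_inter_eq hLR) x = ⟨c, mem_left_of_inter_eq hLR⟩ := by
  have := eq_of_mem_of_inter_eq hLR (x := x)
  unfold retraction
  split_ifs <;> aesop

theorem eq_of_retraction_eq (hcover : ∀ x, x ∈ L ∨ x ∈ R) {x y : V}
    (hL : retraction L (mem_left_of_inter_eq hLR) x = retraction L (mem_left_of_inter_eq hLR) y)
    (hR : retraction R (mem_right_of_inter_eq hLR) x = retraction R (mem_right_of_inter_eq hLR) y) :
    x = y := by
  have := eq_of_mem_of_inter_eq hLR (x := x)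
  have := eq_of_mem_of_inter_eq hLR (x := y)
  have := hcover x
  have := hcover y
  unfold retraction at hL hR
  split_ifs at hL hR <;> aesop

/-- The pullback of the product of `l₁` and `l₂` along `x ↦ (retraction to L, retraction to R)`,
an injective map when `L ∪ R` covers `V`. -/
noncomputable def gluedRel (l₁ : L → L → Prop) (l₂ : R → R → Prop) (x y : V) : Prop :=
  l₁ (retraction L (mem_left_of_inter_eq hLR) x) (retraction L (mem_left_of_inter_eq hLR) y) ∧
    l₂ (retraction R (mem_right_of_inter_eq hLR) x) (retraction R (mem_right_of_inter_eq hLR) y)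

variable {l₁ : L → L → Prop} {l₂ : R → R → Prop}

theorem subrel_gluedRel_left (hl₂ : Std.Refl l₂) : Subrel (gluedRel hLR l₁ l₂) (· ∈ L) = l₁ := by
  funext a b
  simp [gluedRel, retraction_of_mem, retraction_right_of_mem_left hLR a.2,
    retraction_right_of_mem_left hLR b.2, hl₂.refl]

theorem subrel_gluedRel_right (hl₁ : Std.Refl l₁) : Subrel (gluedRel hLR l₁ l₂) (· ∈ R) = l₂ := by
  funext a b
  simp [gluedRel, retraction_of_mem, retraction_left_of_mem_right hLR a.2,
    retraction_left_of_mem_right hLR b.2, hl₁.refl]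

theorem isPartialOrder_gluedRel (hcover : ∀ x, x ∈ L ∨ x ∈ R) (hl₁ : IsPartialOrder L l₁)
    (hl₂ : IsPartialOrder R l₂) : IsPartialOrder V (gluedRel hLR l₁ l₂) where
  refl _ := ⟨hl₁.refl _, hl₂.refl _⟩
  trans _ _ _ h h' := ⟨hl₁.trans _ _ _ h.1 h'.1, hl₂.trans _ _ _ h.2 h'.2⟩
  antisymm _ _ h h' :=
    eq_of_retraction_eq hLR hcover (hl₁.antisymm _ _ h.1 h'.1) (hl₂.antisymm _ _ h.2 h'.2)

variable {le : V → V → Prop} (hside : ∀ x y, le x y → (x ∈ L ∧ y ∈ L) ∨ (x ∈ R ∧ y ∈ R))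
include hside

theorem adaptedG_gluedRel (hl₁ : IsPartialOrder L l₁) (hl₂ : IsPartialOrder R l₂)
    (ha₁ : AdaptedG (Subrel le (· ∈ L)) l₁) (ha₂ : AdaptedG (Subrel le (· ∈ R)) l₂) :
    AdaptedG le (gluedRel hLR l₁ l₂) := by
  rw [← subrel_gluedRel_left hLR (l₁ := l₁) hl₂.toRefl] at ha₁
  rw [← subrel_gluedRel_right hLR (l₂ := l₂) hl₁.toRefl] at ha₂
  intro i j hij
  rcases hside i j hij with ⟨hi, hj⟩ | ⟨hi, hj⟩
  exacts [exists_of_adaptedG_subrel ha₁ hi hj hij, exists_of_adaptedG_subrel ha₂ hi hj hij]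

theorem isOrdConnected_left_of_inter_eq [Std.Antisymm le] : IsOrdConnected le L := by
  intro x y k hx hy hxk hky
  rcases hside x k hxk with ⟨-, hk⟩ | ⟨hx', hk⟩
  · exact hk
  rcases hside k y hky with ⟨hk', -⟩ | ⟨-, hy'⟩
  · exact hk'
  obtain rfl := eq_of_mem_of_inter_eq hLR hx hx'
  obtain rfl := eq_of_mem_of_inter_eq hLR hy hy'
  rwa [antisymm hky hxk]

theorem card_qhStr_eq_mul_of_inter_eq [Std.Refl le] [Std.Antisymm le] :
    Nat.card (QHStr le) =
      Nat.card (QHStr (Subrel le (· ∈ L))) * Nat.card (QHStr (Subrel le (· ∈ R))) := by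
  have hL := isOrdConnected_left_of_inter_eq hLR hside
  have hR : IsOrdConnected le R :=
    isOrdConnected_left_of_inter_eq (Set.inter_comm R L ▸ hLR) fun x y h => (hside x y h).symm
  have hcover : ∀ x, x ∈ L ∨ x ∈ R := fun x => (hside x x (refl x)).imp And.left And.left
  let f (q : QHStr le) := (q.restrict hL, q.restrict hR)
  have hinj : f.Injective := by
    refine Quotient.ind₂ fun a b h => Quotient.sound ?_
    obtain ⟨hdL, hiL⟩ := (qhEquivG_restrict_iff hL).1 (Quotient.exact (congrArg Prod.fst h))
    obtain ⟨hdR, hiR⟩ := (qhEquivG_restrict_iff hR).1 (Quotient.exact (congrArg Prod.snd h))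
    refine qhEquivG_of_forall_le (fun x y hyx => ?_) (fun x y hxy => ?_)
    · rcases hside y x hyx with ⟨hy, hx⟩ | ⟨hy, hx⟩
      exacts [hdL x hx y hy, hdR x hx y hy]
    · rcases hside x y hxy with ⟨hx, hy⟩ | ⟨hx, hy⟩
      exacts [hiL x hx y hy, hiR x hx y hy]
  have hsurj : f.Surjective := by
    rintro ⟨q₁, q₂⟩
    induction q₁ using Quotient.ind with | _ a₁ =>
    induction q₂ using Quotient.ind with | _ a₂ =>
    refine ⟨⟦⟨gluedRel hLR a₁.1 a₂.1, isPartialOrder_gluedRel hLR hcover a₁.2.1 a₂.2.1,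
      adaptedG_gluedRel hLR hside a₁.2.1 a₂.2.1 a₁.2.2 a₂.2.2⟩⟧, ?_⟩
    exact Prod.ext
      (congrArg (Quotient.mk _) (Subtype.ext (subrel_gluedRel_left hLR a₂.2.1.toRefl)))
      (congrArg (Quotient.mk _) (Subtype.ext (subrel_gluedRel_right hLR a₁.2.1.toRefl)))
  rw [Nat.card_eq_of_bijective f ⟨hinj, hsurj⟩, Nat.card_prod]

end Glue

section Chain
variable {α : Type*} [LinearOrder α]

theorem AdaptedOrder.exists_top [Finite α] [Nonempty α]
    (a : AdaptedOrder (· ≤ · : α → α → Prop)) : ∃ m, ∀ x, a.1 x m := by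
  have := a.2.1
  have hdir : Directed a.1 id := by
    intro x y
    by_cases hxy : a.1 x y
    · exact ⟨y, hxy, refl y⟩
    by_cases hyx : a.1 y x
    · exact ⟨x, refl x, hyx⟩
    rcases le_total x y with h | h
    · obtain ⟨k, -, -, hk⟩ := a.2.2 x y h hxy hyx
      exact ⟨k, hk⟩
    · obtain ⟨k, -, -, hk₁, hk₂⟩ := a.2.2 y x h hyx hxy
      exact ⟨k, hk₂, hk₁⟩
  have := Fintype.ofFinite α
  obtain ⟨m, hm⟩ := hdir.finset_le Finset.univ
  exact ⟨m, fun x => hm x (Finset.mem_univ x)⟩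

theorem forall_rel_top_of_qhEquivG {l l' : α → α → Prop} (h : QHEquivG (· ≤ ·) l l') {m : α}
    (hm : ∀ x, l x m) (x : α) : l' x m := by
  rcases le_total x m with hxm | hmx
  · exact ((h.2 x m).1 ⟨hxm, fun k _ _ => hm k⟩).2 x le_rfl hxm
  · exact ((h.1 x m).1 ⟨hmx, fun k _ _ => hm k⟩).2 x hmx le_rfl

theorem decRelG_le_iff_of_top {l : α → α → Prop} [Std.Antisymm l] {m x y : α}
    (hm : ∀ x, l x m) (hym : y ≤ m) (hmx : m ≤ x) : DecRelG (· ≤ ·) l x y ↔ y = m :=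
  ⟨fun h => antisymm (hm y) (h.2 m hym hmx), by rintro rfl; exact ⟨hmx, fun k _ _ => hm k⟩⟩

theorem incRelG_le_iff_of_top {l : α → α → Prop} [Std.Antisymm l] {m x y : α}
    (hm : ∀ x, l x m) (hxm : x ≤ m) (hmy : m ≤ y) : IncRelG (· ≤ ·) l x y ↔ y = m :=
  ⟨fun h => antisymm (hm y) (h.2 m hxm hmy), by rintro rfl; exact ⟨hxm, fun k _ _ => hm k⟩⟩

theorem qhEquivG_le_of_top {l l' : α → α → Prop} [Std.Antisymm l] [Std.Antisymm l'] {m : α}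
    (hm : ∀ x, l x m) (hm' : ∀ x, l' x m)
    (hlt : (∀ x ∈ Iio m, ∀ y ∈ Iio m, DecRelG (· ≤ ·) l x y ↔ DecRelG (· ≤ ·) l' x y) ∧
      ∀ x ∈ Iio m, ∀ y ∈ Iio m, IncRelG (· ≤ ·) l x y ↔ IncRelG (· ≤ ·) l' x y)
    (hgt : (∀ x ∈ Ioi m, ∀ y ∈ Ioi m, DecRelG (· ≤ ·) l x y ↔ DecRelG (· ≤ ·) l' x y) ∧
      ∀ x ∈ Ioi m, ∀ y ∈ Ioi m, IncRelG (· ≤ ·) l x y ↔ IncRelG (· ≤ ·) l' x y) :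
    QHEquivG (· ≤ ·) l l' := by
  refine qhEquivG_of_forall_le (fun x y hyx => ?_) (fun x y hxy => ?_)
  · by_cases hx : x < m
    · exact hlt.1 x hx y (hyx.trans_lt hx)
    by_cases hy : m < y
    · exact hgt.1 x (hy.trans_le hyx) y hy
    rw [decRelG_le_iff_of_top hm (not_lt.1 hy) (not_lt.1 hx),
      decRelG_le_iff_of_top hm' (not_lt.1 hy) (not_lt.1 hx)]
  · by_cases hy : y < m
    · exact hlt.2 x (hxy.trans_lt hy) y hy
    by_cases hx : m < x
    · exact hgt.2 x hx y (hx.trans_le hxy)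
    rw [incRelG_le_iff_of_top hm (not_lt.1 hx) (not_lt.1 hy),
      incRelG_le_iff_of_top hm' (not_lt.1 hx) (not_lt.1 hy)]

section Top
variable [Finite α] [Nonempty α]

noncomputable def AdaptedOrder.top (a : AdaptedOrder (· ≤ · : α → α → Prop)) : α :=
  a.exists_top.choose

theorem AdaptedOrder.rel_top (a : AdaptedOrder (· ≤ · : α → α → Prop)) (x : α) : a.1 x a.top :=
  a.exists_top.choose_spec x

theorem AdaptedOrder.top_eq {a : AdaptedOrder (· ≤ · : α → α → Prop)} {m : α}
    (hm : ∀ x, a.1 x m) : a.top = m :=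
  a.2.1.antisymm _ _ (hm _) (a.rel_top m)

noncomputable def QHStr.top : QHStr (· ≤ · : α → α → Prop) → α :=
  Quotient.lift AdaptedOrder.top fun a _ h =>
    (AdaptedOrder.top_eq (forall_rel_top_of_qhEquivG h a.rel_top)).symm

end Top

def topGlue (m : α) (r₁ : Iio m → Iio m → Prop) (r₂ : Ioi m → Ioi m → Prop) (x y : α) : Prop :=
  y = m ∨ (∃ (hx : x < m) (hy : y < m), r₁ ⟨x, hx⟩ ⟨y, hy⟩) ∨
    ∃ (hx : m < x) (hy : m < y), r₂ ⟨x, hx⟩ ⟨y, hy⟩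

variable {m : α} {r₁ : Iio m → Iio m → Prop} {r₂ : Ioi m → Ioi m → Prop}

theorem subrel_topGlue_Iio : Subrel (topGlue m r₁ r₂) (· ∈ Iio m) = r₁ := by
  funext a b
  refine propext ⟨fun h => ?_, fun h => Or.inr (Or.inl ⟨a.2, b.2, h⟩)⟩
  rcases h with h | ⟨_, _, h⟩ | ⟨h, -, -⟩
  · exact absurd h b.2.ne
  · exact h
  · exact absurd h (lt_asymm a.2)

theorem subrel_topGlue_Ioi : Subrel (topGlue m r₁ r₂) (· ∈ Ioi m) = r₂ := by
  funext a b
  refine propext ⟨fun h => ?_, fun h => Or.inr (Or.inr ⟨a.2, b.2, h⟩)⟩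
  rcases h with h | ⟨h, -, -⟩ | ⟨_, _, h⟩
  · exact absurd h b.2.ne'
  · exact absurd h (lt_asymm a.2)
  · exact h

theorem isPartialOrder_topGlue (h₁ : IsPartialOrder _ r₁) (h₂ : IsPartialOrder _ r₂) :
    IsPartialOrder α (topGlue m r₁ r₂) where
  refl x := by
    rcases lt_trichotomy x m with h | rfl | h
    exacts [Or.inr (Or.inl ⟨h, h, h₁.refl _⟩), Or.inl rfl, Or.inr (Or.inr ⟨h, h, h₂.refl _⟩)]
  trans x y z := by
    rintro (rfl | ⟨hx, hy, h⟩ | ⟨hx, hy, h⟩) (rfl | ⟨hy', hz, h'⟩ | ⟨hy', hz, h'⟩)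
    all_goals first
      | exact Or.inl rfl
      | exact Or.inr (Or.inl ⟨hx, hz, h₁.trans _ _ _ h h'⟩)
      | exact Or.inr (Or.inr ⟨hx, hz, h₂.trans _ _ _ h h'⟩)
      | exfalso; order
  antisymm x y := by
    rintro (rfl | ⟨hx, hy, h⟩ | ⟨hx, hy, h⟩) (h' | ⟨hy', hx', h'⟩ | ⟨hy', hx', h'⟩)
    all_goals first
      | exact h'
      | exact congrArg Subtype.val (h₁.antisymm _ _ h h')
      | exact congrArg Subtype.val (h₂.antisymm _ _ h h')
      | exfalso; order

theorem adaptedG_topGlue (ha₁ : AdaptedG (Subrel (· ≤ ·) (· ∈ Iio m)) r₁)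
    (ha₂ : AdaptedG (Subrel (· ≤ ·) (· ∈ Ioi m)) r₂) : AdaptedG (· ≤ ·) (topGlue m r₁ r₂) := by
  rw [← subrel_topGlue_Iio (r₁ := r₁) (r₂ := r₂)] at ha₁
  rw [← subrel_topGlue_Ioi (r₁ := r₁) (r₂ := r₂)] at ha₂
  intro i j hij
  by_cases hj : j < m
  · exact exists_of_adaptedG_subrel ha₁ (hij.trans_lt hj) hj hij
  by_cases hi : m < i
  · exact exists_of_adaptedG_subrel ha₂ hi (hi.trans_le hij) hij
  exact fun _ _ => ⟨m, not_lt.1 hi, not_lt.1 hj, Or.inl rfl, Or.inl rfl⟩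

theorem card_fiber_qhStr_top [Finite α] [Nonempty α] (m : α) :
    Nat.card {q : QHStr (· ≤ · : α → α → Prop) // q.top = m} =
      Nat.card (QHStr (Subrel (· ≤ ·) (· ∈ Iio m))) *
        Nat.card (QHStr (Subrel (· ≤ ·) (· ∈ Ioi m))) := by
  have hIio := (ordConnected_Iio (a := m)).isOrdConnected
  have hIoi := (ordConnected_Ioi (a := m)).isOrdConnected
  let f (q : {q : QHStr (· ≤ · : α → α → Prop) // q.top = m}) :=
    (q.1.restrict hIio, q.1.restrict hIoi)
  have hinj : f.Injective := by
    rintro ⟨q, hq⟩ ⟨q', hq'⟩ h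
    induction q using Quotient.ind with | _ a =>
    induction q' using Quotient.ind with | _ b =>
    have := a.2.1
    have := b.2.1
    exact Subtype.ext <| Quotient.sound <| qhEquivG_le_of_top (hq ▸ a.rel_top) (hq' ▸ b.rel_top)
      ((qhEquivG_restrict_iff hIio).1 (Quotient.exact (congrArg Prod.fst h)))
      ((qhEquivG_restrict_iff hIoi).1 (Quotient.exact (congrArg Prod.snd h)))
  have hsurj : f.Surjective := by
    rintro ⟨q₁, q₂⟩
    induction q₁ using Quotient.ind with | _ a₁ =>
    induction q₂ using Quotient.ind with | _ a₂ =>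
    let a : AdaptedOrder (· ≤ · : α → α → Prop) := ⟨topGlue m a₁.1 a₂.1,
      isPartialOrder_topGlue a₁.2.1 a₂.2.1, adaptedG_topGlue a₁.2.2 a₂.2.2⟩
    refine ⟨⟨⟦a⟧, AdaptedOrder.top_eq fun _ => Or.inl rfl⟩, ?_⟩
    exact Prod.ext (congrArg (Quotient.mk _) (Subtype.ext subrel_topGlue_Iio))
      (congrArg (Quotient.mk _) (Subtype.ext subrel_topGlue_Ioi))
  rw [Nat.card_eq_of_bijective f ⟨hinj, hsurj⟩, Nat.card_prod]

theorem card_qhStr_le_eq_sum [Fintype α] [Nonempty α] :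
    Nat.card (QHStr (· ≤ · : α → α → Prop)) = ∑ m : α,
      Nat.card (QHStr (Subrel (· ≤ ·) (· ∈ Iio m))) *
        Nat.card (QHStr (Subrel (· ≤ ·) (· ∈ Ioi m))) := by
  rw [← Nat.card_congr (Equiv.sigmaFiberEquiv QHStr.top), Nat.card_sigma]
  exact Finset.sum_congr rfl fun m _ => card_fiber_qhStr_top m

theorem card_Iio_eq_of_orderIso {n : ℕ} (e : α ≃o Fin n) (m : α) : Nat.card (Iio m) = e m := by
  rw [← Nat.card_image_of_injective e.injective, e.image_Iio, Nat.card_coe_set_eq,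
    ← Finset.coe_Iio, Set.ncard_coe_finset, Fin.card_Iio]

theorem card_Ioi_eq_of_orderIso {n : ℕ} (e : α ≃o Fin n) (m : α) :
    Nat.card (Ioi m) = n - 1 - e m := by
  rw [← Nat.card_image_of_injective e.injective, e.image_Ioi, Nat.card_coe_set_eq,
    ← Finset.coe_Ioi, Set.ncard_coe_finset, Fin.card_Ioi]

end Chain

theorem card_qhStr_le (α : Type*) [LinearOrder α] [Finite α] :
    Nat.card (QHStr (· ≤ · : α → α → Prop)) = catalan (Nat.card α) := by
  induction h : Nat.card α using Nat.strong_induction_on generalizing α with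
  | _ n ih =>
  have := Fintype.ofFinite α
  rcases n with _ | k
  · have : IsEmpty α := Finite.card_eq_zero_iff.1 h
    rw [card_qhStr_of_isEmpty, catalan_zero]
  have : Nonempty α := Finite.card_pos_iff.1 (h ▸ k.succ_pos)
  let e : α ≃o Fin (k + 1) :=
    (Fintype.orderIsoFinOfCardEq α (Nat.card_eq_fintype_card (α := α) ▸ h)).symm
  have hsub (s : Set α) (hs : Nat.card s < k + 1) :
      Nat.card (QHStr (Subrel (· ≤ ·) (· ∈ s))) = catalan (Nat.card s) :=
    ih _ hs s rfl
  rw [card_qhStr_le_eq_sum, catalan_succ]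
  refine Fintype.sum_equiv e.toEquiv _ _ fun m => ?_
  have hIio := card_Iio_eq_of_orderIso e m
  have hIoi := card_Ioi_eq_of_orderIso e m
  rw [hsub _ (by omega), hsub _ (by omega), hIio, hIoi]
  rfl

def linePath (o : ℕ → Bool) (x y : ℕ) : Prop :=
  (x ≤ y ∧ ∀ e, x ≤ e → e < y → o e = true) ∨ (y ≤ x ∧ ∀ e, y ≤ e → e < x → o e = false)

instance (o : ℕ → Bool) : IsPartialOrder ℕ (linePath o) where
  refl _ := Or.inl ⟨le_rfl, fun _ h h' => absurd h' (not_lt.2 h)⟩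
  trans _ _ _ hxy hyz := by
    unfold linePath at *
    grind
  antisymm x y hxy hyx := by
    unfold linePath at *
    cases hx : o x <;> cases hy : o y <;> grind

theorem Fin.val_orderSucc_of_lt {n : ℕ} {k j : Fin n} (h : k < j) :
    (Order.succ k).val = k.val + 1 := by
  have h₁ : k < Order.succ k := Order.lt_succ_of_not_isMax (not_isMax_of_lt h)
  have h₂ : (Order.succ k).val ≤ k.val + 1 :=
    Fin.le_def.1 (Order.succ_le_of_lt (b := ⟨k + 1, by omega⟩) (Fin.lt_def.2 (by simp)))
  exact le_antisymm h₂ (Fin.lt_def.1 h₁)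

theorem reflTransGen_lineArrow_iff {n : ℕ} {o : ℕ → Bool} {i j : Fin n} :
    Relation.ReflTransGen (lineArrow n o) i j ↔ linePath o i j := by
  constructor
  · intro h
    induction h with
    | refl => exact refl _
    | @tail b c _ hbc ih =>
      refine _root_.trans ih ?_
      rcases hbc with ⟨hbc, hb⟩ | ⟨hcb, hc⟩
      · exact Or.inl ⟨by omega, fun e _ _ => by rwa [show e = b by omega]⟩
      · exact Or.inr ⟨by omega, fun e _ _ => by rwa [show e = c by omega]⟩
  · rintro (⟨hij, h⟩ | ⟨hji, h⟩)
    · refine reflTransGen_of_succ_of_le _ (fun k hk => Or.inl ?_) hij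
      exact ⟨(Fin.val_orderSucc_of_lt hk.2).symm, h k hk.1 hk.2⟩
    · refine reflTransGen_of_succ_of_ge _ (fun k hk => Or.inr ?_) hji
      exact ⟨(Fin.val_orderSucc_of_lt hk.2).symm, h k hk.1 hk.2⟩

def lineArrowIsoIcc (o : ℕ → Bool) (b : ℕ) :
    Relation.ReflTransGen (lineArrow (b + 1) o) ≃r Subrel (linePath o) (· ∈ Icc 0 b) where
  toFun i := ⟨i, Nat.zero_le _, Nat.lt_succ_iff.1 i.2⟩
  invFun x := ⟨x, Nat.lt_succ_of_le x.2.2⟩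
  left_inv _ := rfl
  right_inv _ := rfl
  map_rel_iff' := reflTransGen_lineArrow_iff.symm

section Interval
variable {o : ℕ → Bool} {a b : ℕ}

theorem linePath_iff_le {x y : ℕ} (h : ∀ e, a ≤ e → e < b → o e = true) (hx : x ∈ Icc a b)
    (hy : y ∈ Icc a b) : linePath o x y ↔ x ≤ y := by
  obtain ⟨hax, hxb⟩ := hx
  obtain ⟨hay, hyb⟩ := hy
  refine ⟨?_, fun hxy => Or.inl ⟨hxy, fun e he he' => h e (by omega) (by omega)⟩⟩
  rintro (⟨hxy, -⟩ | ⟨hyx, h'⟩)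
  · exact hxy
  · by_contra hlt
    simpa [h y hay (by omega)] using h' y le_rfl (by omega)

theorem linePath_iff_ge {x y : ℕ} (h : ∀ e, a ≤ e → e < b → o e = false) (hx : x ∈ Icc a b)
    (hy : y ∈ Icc a b) : linePath o x y ↔ y ≤ x := by
  obtain ⟨hax, hxb⟩ := hx
  obtain ⟨hay, hyb⟩ := hy
  refine ⟨?_, fun hyx => Or.inr ⟨hyx, fun e he he' => h e (by omega) (by omega)⟩⟩
  rintro (⟨hxy, h'⟩ | ⟨hyx, -⟩)
  · by_contra hlt
    simpa [h x hax (by omega)] using h' x le_rfl (by omega)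
  · exact hyx

theorem card_qhStr_linePath_Icc_of_const (h : ∀ e, a ≤ e → e < b → o e = o a) :
    Nat.card (QHStr (Subrel (linePath o) (· ∈ Icc a b))) = catalan (b + 1 - a) := by
  rw [← Set.ncard_Icc_nat, ← Nat.card_coe_set_eq]
  cases ho : o a
  · have : Subrel (linePath o) (· ∈ Icc a b) = fun x y => y ≤ x :=
      funext₂ fun x y => propext (linePath_iff_ge (ho ▸ h) x.2 y.2)
    rw [this]
    -- `fun x y => y ≤ x` is, by definition, the order of `(Icc a b)ᵒᵈ`
    exact card_qhStr_le (Icc a b)ᵒᵈ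
  · have : Subrel (linePath o) (· ∈ Icc a b) = (· ≤ ·) :=
      funext₂ fun x y => propext (linePath_iff_le (ho ▸ h) x.2 y.2)
    rw [this]
    exact card_qhStr_le (Icc a b)

theorem linePath_not_crossing {c x y : ℕ} (hflip : o (c - 1) ≠ o c) (h : linePath o x y) :
    (x ≤ c ∧ y ≤ c) ∨ (c ≤ x ∧ c ≤ y) := by
  by_contra hcross
  rcases h with ⟨_, h⟩ | ⟨_, h⟩ <;>
    exact hflip ((h (c - 1) (by omega) (by omega)).trans (h c (by omega) (by omega)).symm)

theorem card_qhStr_linePath_Icc_split {c : ℕ} (hac : a ≤ c) (hcb : c ≤ b)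
    (hflip : o (c - 1) ≠ o c) :
    Nat.card (QHStr (Subrel (linePath o) (· ∈ Icc a b))) =
      Nat.card (QHStr (Subrel (linePath o) (· ∈ Icc a c))) *
        Nat.card (QHStr (Subrel (linePath o) (· ∈ Icc c b))) := by
  have hLR : (Subtype.val ⁻¹' Icc a c : Set (Icc a b)) ∩ Subtype.val ⁻¹' Icc c b =
      {⟨c, hac, hcb⟩} := by
    ext x
    have := x.2.1
    simp only [mem_inter_iff, mem_preimage, mem_Icc, mem_singleton_iff, Subtype.ext_iff]
    omega
  rw [card_qhStr_eq_mul_of_inter_eq hLR, Nat.card_congr (QHStr.congr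
      (Subrel.preimageValIso _ (Icc_subset_Icc_right hcb))),
    Nat.card_congr (QHStr.congr (Subrel.preimageValIso _ (Icc_subset_Icc_left hac)))]
  intro x y hxy
  have := linePath_not_crossing hflip hxy
  have := x.2
  have := y.2
  simp only [mem_preimage, mem_Icc] at *
  omega

end Interval

theorem cutPt_zero (ns : List ℕ) : cutPt ns 0 = 0 := rfl

theorem cutPt_cons_succ (m : ℕ) (ns : List ℕ) (t : ℕ) :
    cutPt (m :: ns) (t + 1) = m - 1 + cutPt ns t := by
  simp [cutPt]

/-- A segment of size `0` has, by truncated subtraction, as many edges as one of size `1`. -/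
theorem catalan_sub_one_add_one (m : ℕ) : catalan (m - 1 + 1) = catalan m := by
  cases m <;> simp [catalan_one]

theorem card_qhStr_linePath_segments (o : ℕ → Bool) (ns : List ℕ) (a : ℕ)
    (hconst : ∀ t e₁ e₂ : ℕ, a + cutPt ns t ≤ e₁ → e₁ < a + cutPt ns (t + 1) →
      a + cutPt ns t ≤ e₂ → e₂ < a + cutPt ns (t + 1) → o e₁ = o e₂)
    (hflip : ∀ t, t + 1 < ns.length → o (a + cutPt ns (t + 1) - 1) ≠ o (a + cutPt ns (t + 1))) :
    Nat.card (QHStr (Subrel (linePath o) (· ∈ Icc a (a + (ns.map fun m => m - 1).sum)))) =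
      (ns.map catalan).prod := by
  induction ns generalizing a with
  | nil =>
    rw [List.map_nil, List.sum_nil, add_zero, card_qhStr_linePath_Icc_of_const (by omega)]
    simp [catalan_one]
  | cons m ns ih =>
    have hfirst : Nat.card (QHStr (Subrel (linePath o) (· ∈ Icc a (a + (m - 1))))) =
        catalan m := by
      have h₀ := hconst 0
      rw [cutPt_cons_succ, cutPt_zero, cutPt_zero, add_zero, add_zero] at h₀
      rw [card_qhStr_linePath_Icc_of_const fun e he he' => h₀ e a he he' le_rfl (by omega),
        ← catalan_sub_one_add_one m]
      congr 1
      omega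
    rcases ns with _ | ⟨m', ns⟩
    · rw [List.map_singleton, List.sum_singleton, hfirst, List.map_singleton, List.prod_singleton]
    have hshift (t : ℕ) :
        a + cutPt (m :: m' :: ns) (t + 1) = a + (m - 1) + cutPt (m' :: ns) t := by
      rw [cutPt_cons_succ, add_assoc]
    have hflip₀ := hflip 0 (by simp)
    rw [hshift, cutPt_zero, add_zero] at hflip₀
    rw [List.map_cons, List.sum_cons, ← add_assoc,
      card_qhStr_linePath_Icc_split (by omega) (by omega) hflip₀, hfirst,
      ih (a + (m - 1)) (fun t => by simpa only [hshift] using hconst (t + 1))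
        (fun t ht => by simpa only [hshift] using hflip (t + 1) (by simpa using ht))]
    exact List.prod_cons.symm

theorem card_qhStr_typeA_general (n : ℕ) (o : ℕ → Bool) (ns : List ℕ)
    (hsum : (ns.map fun m => m - 1).sum + 1 = n)
    (hconst : ∀ t e₁ e₂ : ℕ,
      cutPt ns t ≤ e₁ → e₁ < cutPt ns (t + 1) →
      cutPt ns t ≤ e₂ → e₂ < cutPt ns (t + 1) → o e₁ = o e₂)
    (hflip : ∀ t, t + 1 < ns.length → o (cutPt ns (t + 1) - 1) ≠ o (cutPt ns (t + 1))) :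
    Nat.card (Quot (fun (l₁ l₂ : {l : Fin n → Fin n → Prop //
        IsPartialOrder (Fin n) l ∧ AdaptedG (Relation.ReflTransGen (lineArrow n o)) l}) =>
      QHEquivG (Relation.ReflTransGen (lineArrow n o)) l₁.1 l₂.1)) =
      (ns.map catalan).prod := by
  subst hsum
  have hsegments := card_qhStr_linePath_segments o ns 0 (by simpa only [zero_add] using hconst)
    (by simpa only [zero_add] using hflip)
  rw [zero_add] at hsegments
  exact (Nat.card_congr (QHStr.congr (lineArrowIsoIcc o _))).trans hsegments

/-- the number of quasi-hereditary structures on the path algebra of a type `A`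
quiver is the product of the Catalan numbers of the sizes of its maximal equioriented
segments. -/
theorem card_qhStr_typeA (n : ℕ) (hn : 1 ≤ n) (o : ℕ → Bool) (ns : List ℕ)
    (hne : ns ≠ []) (hpos : ∀ m ∈ ns, 1 ≤ m)
    (hsum : (ns.map fun m => m - 1).sum + 1 = n)
    (hconst : ∀ t e₁ e₂ : ℕ,
      cutPt ns t ≤ e₁ → e₁ < cutPt ns (t + 1) →
      cutPt ns t ≤ e₂ → e₂ < cutPt ns (t + 1) → o e₁ = o e₂)
    (hflip : ∀ t, t + 1 < ns.length → o (cutPt ns (t + 1) - 1) ≠ o (cutPt ns (t + 1))) :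
    Nat.card (Quot (fun (l₁ l₂ : {l : Fin n → Fin n → Prop //
        IsPartialOrder (Fin n) l ∧ AdaptedG (Relation.ReflTransGen (lineArrow n o)) l}) =>
      QHEquivG (Relation.ReflTransGen (lineArrow n o)) l₁.1 l₂.1)) =
      (ns.map catalan).prod :=
  card_qhStr_typeA_general n o ns hsum hconst hflip
end
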